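/- Let α ∈ (0,1) and M_A ≤ n < M_{A+1} with digits n = Σ_{k=0}^A n_k M_k and partial values n^{(k)} = n_k M_k + ⋯ + n_0 M_0, n^{(−1)} = 0. Then Σ_{j=1}^{n} A_{n−j}^{−α−1} D_j(x) = Σ_{k=0}^{A} (∏_{l=k+1}^{A} ψ_{n_l M_l}(x)) D_{n_k M_k}(x) A_{n^{(k)}−1}^{−α} − Σ_{k=0}^{A} (∏_{l=k+1}^{A} ψ_{n_l M_l}(x)) ψ_{n_k M_k −1}(x) Σ_{j=0}^{n_k M_k −1} A_{n^{(k−1)}+j}^{−α−1} conj(D_j(x)). -/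

import Mathlib

/-!
Write `n = q M_A + r` with `r < M_A`. For `q ≤ m_A` the Dirichlet kernels satisfy
`D_{q M_A + i} = D_{q M_A} + ψ_{q M_A} D_i` for `i < M_A`, and
`D_{q M_A - i} = D_{q M_A} - ψ_{q M_A - 1} conj D_i` for `i ≤ q M_A`, because the digits of `i`
and `q M_A - 1 - i` add without carries. Splitting `∑_{i<n} a_i D_{n-i}` at `i = r` and applying
these two formulas peels off the top digit, leaving `ψ_{q M_A}` times the same sum for `r`.
Induction on `A` gives the expansion for arbitrary weights `a`; for `a_i = A_i^{-α-1}` the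
partial sums `∑_{i<N} A_i^{-α-1} = A_{N-1}^{-α}` are the coefficients of the theorem.
-/

open scoped BigOperators
open Complex MeasureTheory

noncomputable section
namespace Vilenkin

/-- The generalized powers `M 0 = 1`, `M (k+1) = m k * M k`. -/
def M (m : ℕ → ℕ) : ℕ → ℕ
  | 0 => 1
  | k + 1 => m k * M m k

/-- The Vilenkin group: complete direct product of the cyclic groups `ZMod (m k)`. -/
abbrev G (m : ℕ → ℕ) := ∀ k, ZMod (m k)

instance (n : ℕ) : MeasurableSpace (ZMod n) := ⊤
instance (n : ℕ) : TopologicalSpace (ZMod n) := ⊥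

/-- `k`-th digit of `n` in the generalized number system based on `m`. -/
def dig (m : ℕ → ℕ) (n k : ℕ) : ℕ := (n / M m k) % m k

/-- The generalized Rademacher functions. -/
def rad (m : ℕ → ℕ) (k : ℕ) (x : G m) : ℂ :=
  Complex.exp (2 * Real.pi * Complex.I * ((x k).val : ℝ) / (m k : ℝ))

/-- The Vilenkin functions. -/
def psi (m : ℕ → ℕ) (n : ℕ) (x : G m) : ℂ :=
  ∏ k ∈ Finset.range (n + 1), rad m k x ^ dig m n k

/-- The Dirichlet kernels. -/
def D (m : ℕ → ℕ) (n : ℕ) (x : G m) : ℂ := ∑ j ∈ Finset.range n, psi m j x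

/-- The basic neighbourhood `I_k = {y : y_0 = ⋯ = y_{k-1} = 0}`. -/
def Icyl (m : ℕ → ℕ) (k : ℕ) : Set (G m) := {y | ∀ j < k, y j = 0}

/-- The coset representative `Z_β^{(k)}`, supported on coordinates `< k`,
with `β = ∑_{j<k} x_j · (M_k / M_{j+1})`. -/
def Z (m : ℕ → ℕ) (k β : ℕ) : G m :=
  fun j => if j < k then ((β / (M m k / M m (j + 1))) % m j : ℕ) else 0

/-- The `k`-th coordinate unit vector `e_k`. -/
def e (m : ℕ → ℕ) (k : ℕ) : G m := fun j => if j = k then 1 else 0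

/-- Cesàro numbers `A_0^α = 1`, `A_n^α = (α+1)⋯(α+n)/n!`. -/
def A (α : ℝ) (n : ℕ) : ℝ := ∏ j ∈ Finset.range n, (α + j + 1) / (j + 1)

/-- Partial value `n^{(k-1)} = ∑_{j<k} n_j M_j` of the expansion of `n`. -/
def npart (m : ℕ → ℕ) (n k : ℕ) : ℕ := ∑ j ∈ Finset.range k, dig m n j * M m j

/-- `μ` is the (normalized Haar) probability measure on `G m` iff it gives each
cylinder of depth `k` measure `1 / M_k`. -/
def IsHaar (m : ℕ → ℕ) (μ : Measure (G m)) : Prop :=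
  IsProbabilityMeasure μ ∧
    ∀ (k : ℕ) (z : G m), μ {y | ∀ j < k, y j = z j} = 1 / (M m k : ENNReal)

/-- The `(C,a)` Cesàro kernel `K_n^{a}`. -/
def K (m : ℕ → ℕ) (a : ℝ) (n : ℕ) (x : G m) : ℂ :=
  (A a (n - 1) : ℂ)⁻¹ * ∑ ν ∈ Finset.range n, (A a (n - 1 - ν) : ℝ) * psi m ν x

/-- Vilenkin-Fourier coefficients. -/
def fhat (m : ℕ → ℕ) (μ : Measure (G m)) (f : G m → ℂ) (k : ℕ) : ℂ :=
  ∫ t, f t * (starRingEnd ℂ) (psi m k t) ∂μ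

/-- Partial sums of the Vilenkin-Fourier series. -/
def S (m : ℕ → ℕ) (μ : Measure (G m)) (f : G m → ℂ) (n : ℕ) (x : G m) : ℂ :=
  ∑ k ∈ Finset.range n, fhat m μ f k * psi m k x

/-- The `(C, a)` Cesàro means of the Vilenkin-Fourier series,
`σ_n^{a} f = (1/A_{n-1}^{a}) ∑_{ν=0}^{n} A_{n-ν}^{a-1} S_ν f`. -/
def ces (m : ℕ → ℕ) (μ : Measure (G m)) (a : ℝ) (n : ℕ) (f : G m → ℂ) (x : G m) : ℂ :=
  (A a (n - 1) : ℂ)⁻¹ * ∑ ν ∈ Finset.range (n + 1), (A (a - 1) (n - ν) : ℝ) * S m μ f ν x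

/-- Oscillation of `f` on the set `E`. -/
def osc {m : ℕ → ℕ} (f : G m → ℂ) (E : Set (G m)) : ℝ :=
  ⨆ p : E × E, ‖f p.1 - f p.2‖

/-- `ν(M_k, f) = ∑_{β=0}^{M_k-1} ω(f, I_k + Z_β^{(k)})`. -/
def nu (m : ℕ → ℕ) (f : G m → ℂ) (k : ℕ) : ℝ :=
  ∑ β ∈ Finset.range (M m k), osc f ((Z m k β + ·) '' Icyl m k)

open Finset ComplexConjugate

lemma sum_Icc_one_sub {β : Type*} [AddCommMonoid β] (g : ℕ → ℕ → β) (n : ℕ) :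
    ∑ j ∈ Icc 1 n, g (n - j) j = ∑ i ∈ range n, g i (n - i) := by
  refine sum_nbij' (fun j => n - j) (fun i => n - i) ?_ ?_ ?_ ?_ ?_ <;> intro a ha <;>
    simp only [mem_Icc, mem_range] at ha ⊢
  · omega
  · omega
  · omega
  · omega
  · rw [Nat.sub_sub_self ha.2]

lemma mod_add_mod_lt_of_add_one_eq {a b N p : ℕ} (hN : a + b + 1 = N) (hp : p ∣ N ∨ N ≤ p) :
    a % p + b % p < p := by
  rcases hp with ⟨c, rfl⟩ | hle
  · have hp : 0 < p := Nat.pos_of_ne_zero fun h => by simp [h] at hN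
    obtain ⟨t, ht⟩ : p ∣ a % p + b % p + 1 := by
      have hsplit : p * c = (a % p + b % p + 1) + p * (a / p + b / p) := by
        rw [← hN, mul_add]
        linarith [Nat.mod_add_div a p, Nat.mod_add_div b p]
      exact (Nat.dvd_add_left (dvd_mul_right p _)).mp (hsplit ▸ dvd_mul_right p c)
    have ha := Nat.mod_lt a hp
    have hb := Nat.mod_lt b hp
    rcases t with _ | _ | t
    · omega
    · omega
    · nlinarith
  · exact (Nat.add_le_add (Nat.mod_le a p) (Nat.mod_le b p)).trans_lt (by omega)

section Digits

variable {m : ℕ → ℕ}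

lemma M_succ (k : ℕ) : M m (k + 1) = m k * M m k := rfl

lemma M_pos (hm : ∀ k, 0 < m k) : ∀ k, 0 < M m k
  | 0 => Nat.one_pos
  | k + 1 => Nat.mul_pos (hm k) (M_pos hm k)

lemma M_dvd_M {j k : ℕ} (h : j ≤ k) : M m j ∣ M m k := by
  induction h with
  | refl => exact dvd_rfl
  | step _ ih => exact ih.trans (dvd_mul_left _ _)

lemma M_le_M (hm : ∀ k, 0 < m k) {j k : ℕ} (h : j ≤ k) : M m j ≤ M m k :=
  Nat.le_of_dvd (M_pos hm k) (M_dvd_M h)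

lemma lt_M_self (hm : ∀ k, 2 ≤ m k) (n : ℕ) : n < M m n := by
  have two_pow_le : ∀ k, 2 ^ k ≤ M m k := fun k => by
    induction k with
    | zero => rfl
    | succ k ih => rw [pow_succ, M_succ, mul_comm]; exact Nat.mul_le_mul (hm k) ih
  exact Nat.lt_two_pow_self.trans_le (two_pow_le n)

lemma dig_eq_zero_of_lt {n k : ℕ} (h : n < M m k) : dig m n k = 0 := by
  simp [dig, Nat.div_eq_of_lt h]

lemma dig_mul_M_self (hm : ∀ k, 0 < m k) (a k : ℕ) : dig m (a * M m k) k = a % m k := by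
  rw [dig, Nat.mul_div_cancel a (M_pos hm k)]

lemma dig_mul_M_add_of_lt (hm : ∀ k, 0 < m k) {j k : ℕ} (hjk : j < k) (a i : ℕ) :
    dig m (a * M m k + i) j = dig m i j := by
  obtain ⟨c, hc⟩ := M_dvd_M (m := m) hjk
  have hdecomp : a * M m k = a * c * m j * M m j := by rw [hc, M_succ]; ring
  rw [dig, dig, hdecomp, add_comm, Nat.add_mul_div_right _ _ (M_pos hm j),
    Nat.add_mul_mod_self_right]

lemma npart_eq_mod (n : ℕ) : ∀ k, npart m n k = n % M m k
  | 0 => by simp [npart, M, Nat.mod_one]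
  | k + 1 => by
    rw [npart, sum_range_succ, ← npart, npart_eq_mod n k, M_succ, mul_comm (m k), Nat.mod_mul,
      dig, mul_comm]

lemma npart_lt (hm : ∀ k, 0 < m k) (n k : ℕ) : npart m n k < M m k := by
  rw [npart_eq_mod]
  exact Nat.mod_lt _ (M_pos hm k)

lemma dig_mul_M_add_npart {n k : ℕ} (hn : n < M m (k + 1)) :
    dig m n k * M m k + npart m n k = n := by
  have h := npart_eq_mod (m := m) n (k + 1)
  rw [npart, sum_range_succ, ← npart, Nat.mod_eq_of_lt hn] at h
  omega

lemma dig_add_of_mod_add_mod_lt {u v : ℕ}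
    (h : ∀ l, u % M m l + v % M m l < M m l) (l : ℕ) :
    dig m (u + v) l = dig m u l + dig m v l := by
  have hcarry : dig m u l + dig m v l < m l := by
    have h' := h (l + 1)
    rw [M_succ, mul_comm, Nat.mod_mul, Nat.mod_mul] at h'
    refine Nat.lt_of_mul_lt_mul_left (a := M m l) ?_
    rw [mul_add]
    simp only [dig]
    omega
  rw [dig, Nat.add_div_eq_of_add_mod_lt (h l), Nat.add_mod]
  exact Nat.mod_eq_of_lt hcarry

lemma mul_M_mod_add_mod_lt (hm : ∀ k, 0 < m k) {k i : ℕ} (hi : i < M m k) (a l : ℕ) :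
    a * M m k % M m l + i % M m l < M m l := by
  rcases le_total l k with hlk | hkl
  · rw [Nat.mod_eq_zero_of_dvd (dvd_mul_of_dvd_right (M_dvd_M hlk) a), zero_add]
    exact Nat.mod_lt i (M_pos hm l)
  · obtain ⟨c, hc⟩ := M_dvd_M (m := m) hkl
    have hc0 : 0 < c := Nat.pos_of_mul_pos_left (hc ▸ M_pos hm l)
    rw [hc, mul_comm a, Nat.mul_mod_mul_left,
      Nat.mod_eq_of_lt (hi.trans_le (Nat.le_mul_of_pos_right _ hc0))]
    have := Nat.mod_lt a hc0
    nlinarith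

end Digits

section Characters

variable {m : ℕ → ℕ}

lemma norm_rad (k : ℕ) (x : G m) : ‖rad m k x‖ = 1 := by
  have hexp : rad m k x = Complex.exp ((2 * Real.pi * (x k).val / m k : ℝ) * Complex.I) := by
    rw [rad]
    push_cast
    ring_nf
  rw [hexp, Complex.norm_exp_ofReal_mul_I]

lemma norm_psi (n : ℕ) (x : G m) : ‖psi m n x‖ = 1 := by
  simp [psi, norm_rad]

lemma psi_eq_prod_range (hm : ∀ k, 2 ≤ m k) {n t : ℕ} (ht : n < M m t) (x : G m) :
    psi m n x = ∏ k ∈ range t, rad m k x ^ dig m n k := by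
  have hm0 : ∀ k, 0 < m k := fun k => two_pos.trans_le (hm k)
  have hvanish : ∀ k, n < M m k → rad m k x ^ dig m n k = 1 := fun k hk => by
    rw [dig_eq_zero_of_lt hk, pow_zero]
  rw [psi]
  rcases le_total (n + 1) t with h | h
  · exact prod_subset (range_subset_range.2 h) fun k _ hk =>
      hvanish k ((lt_M_self hm n).trans_le (M_le_M hm0 (by simp at hk; omega)))
  · exact (prod_subset (range_subset_range.2 h) fun k _ hk =>
      hvanish k (ht.trans_le (M_le_M hm0 (by simpa using hk)))).symm

lemma psi_add (hm : ∀ k, 2 ≤ m k) {u v : ℕ}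
    (h : ∀ l, dig m (u + v) l = dig m u l + dig m v l) (x : G m) :
    psi m (u + v) x = psi m u x * psi m v x := by
  have hlt := lt_M_self hm (u + v)
  rw [psi_eq_prod_range hm hlt, psi_eq_prod_range hm ((Nat.le_add_right u v).trans_lt hlt),
    psi_eq_prod_range hm ((Nat.le_add_left v u).trans_lt hlt), ← prod_mul_distrib]
  exact prod_congr rfl fun l _ => by rw [h l, pow_add]

lemma psi_mul_M_add (hm : ∀ k, 2 ≤ m k) {k i : ℕ} (hi : i < M m k) (a : ℕ) (x : G m) :
    psi m (a * M m k + i) x = psi m (a * M m k) x * psi m i x :=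
  have hm0 : ∀ k, 0 < m k := fun k => two_pos.trans_le (hm k)
  psi_add hm (dig_add_of_mod_add_mod_lt (mul_M_mod_add_mod_lt hm0 hi a)) x

lemma psi_sub_one_sub (hm : ∀ k, 2 ≤ m k) {A q v : ℕ} (hq : q ≤ m A) (hv : v < q * M m A)
    (x : G m) :
    psi m (q * M m A - 1 - v) x = psi m (q * M m A - 1) x * conj (psi m v x) := by
  have hm0 : ∀ k, 0 < m k := fun k => two_pos.trans_le (hm k)
  set Q := q * M m A
  have hcompat : ∀ l, M m l ∣ Q ∨ Q ≤ M m l := fun l => by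
    rcases le_or_gt l A with h | h
    · exact Or.inl (dvd_mul_of_dvd_right (M_dvd_M h) q)
    · exact Or.inr ((Nat.mul_le_mul_right _ hq).trans (M_le_M hm0 h))
  have hmul := psi_add hm (dig_add_of_mod_add_mod_lt fun l =>
    mod_add_mod_lt_of_add_one_eq (show v + (Q - 1 - v) + 1 = Q by omega) (hcompat l)) x
  rw [show v + (Q - 1 - v) = Q - 1 by omega] at hmul
  rw [hmul, mul_comm (psi m v x), mul_assoc, Complex.mul_conj', norm_psi]
  simp

end Characters

section Dirichlet

variable {m : ℕ → ℕ}

lemma D_zero (x : G m) : D m 0 x = 0 := sum_range_zero _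

lemma D_add (n i : ℕ) (x : G m) : D m (n + i) x = D m n x + ∑ j ∈ range i, psi m (n + j) x :=
  sum_range_add _ _ _

lemma D_mul_M_add (hm : ∀ k, 2 ≤ m k) {k i : ℕ} (hi : i < M m k) (a : ℕ) (x : G m) :
    D m (a * M m k + i) x = D m (a * M m k) x + psi m (a * M m k) x * D m i x := by
  rw [D_add]
  congr 1
  rw [D, mul_sum]
  exact sum_congr rfl fun j hj => psi_mul_M_add hm ((mem_range.1 hj).trans hi) a x

lemma D_sub (hm : ∀ k, 2 ≤ m k) {A q i : ℕ} (hq : q ≤ m A) (hi : i ≤ q * M m A) (x : G m) :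
    D m (q * M m A - i) x = D m (q * M m A) x - psi m (q * M m A - 1) x * conj (D m i x) := by
  set Q := q * M m A
  have htail : ∑ j ∈ range i, psi m (Q - i + j) x = psi m (Q - 1) x * conj (D m i x) := by
    rw [← sum_range_reflect (fun j => psi m (Q - i + j) x), D, map_sum, mul_sum]
    refine sum_congr rfl fun j hj => ?_
    have hj := mem_range.1 hj
    rw [show Q - i + (i - 1 - j) = Q - 1 - j by omega, psi_sub_one_sub hm hq (by omega)]
  have hsplit := D_add (Q - i) i x
  rw [Nat.sub_add_cancel hi, htail] at hsplit
  exact eq_sub_of_add_eq hsplit.symm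

end Dirichlet

section Cesaro

lemma A_succ (β : ℝ) (t : ℕ) : A β (t + 1) = A β t * ((β + t + 1) / (t + 1)) :=
  prod_range_succ _ _

lemma add_mul_A_sub_one (β : ℝ) : ∀ t : ℕ, (β + t) * A (β - 1) t = β * A β t
  | 0 => by simp [A]
  | t + 1 => by
    rw [A_succ, A_succ]
    push_cast
    linear_combination (β + t + 1) / (t + 1) * add_mul_A_sub_one β t

lemma A_succ_eq_add (β : ℝ) (t : ℕ) : A β (t + 1) = A β t + A (β - 1) (t + 1) := by
  have ht : (t : ℝ) + 1 ≠ 0 := by positivity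
  rw [A_succ, A_succ]
  field_simp
  linear_combination -add_mul_A_sub_one β t

lemma sum_range_succ_A_sub_one (β : ℝ) : ∀ t : ℕ, ∑ i ∈ range (t + 1), A (β - 1) i = A β t
  | 0 => by simp [A]
  | t + 1 => by rw [sum_range_succ, sum_range_succ_A_sub_one β t, ← A_succ_eq_add]

lemma sum_range_A_sub_one (β : ℝ) {t : ℕ} (ht : 0 < t) :
    ∑ i ∈ range t, A (β - 1) i = A β (t - 1) := by
  obtain ⟨s, rfl⟩ : ∃ s, t = s + 1 := ⟨t - 1, by omega⟩
  exact sum_range_succ_A_sub_one β s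

end Cesaro

section Expansion

variable {m : ℕ → ℕ}

lemma sum_range_mul_D_sub_mul_M_add (hm : ∀ k, 2 ≤ m k) (w : ℕ → ℂ) {A q r : ℕ}
    (hq : q ≤ m A) (hr : r < M m A) (x : G m) :
    ∑ i ∈ range (q * M m A + r), w i * D m (q * M m A + r - i) x =
      D m (q * M m A) x * ∑ i ∈ range (q * M m A + r), w i
        - psi m (q * M m A - 1) x * ∑ i ∈ range (q * M m A), w (r + i) * conj (D m i x)
        + psi m (q * M m A) x * ∑ i ∈ range r, w i * D m (r - i) x := by
  set Q := q * M m A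
  have hhead : ∀ i ∈ range r,
      w i * D m (r + Q - i) x = w i * D m Q x + psi m Q x * (w i * D m (r - i) x) := by
    intro i hi
    have hi := mem_range.1 hi
    rw [show r + Q - i = Q + (r - i) by omega, D_mul_M_add hm (by omega) q x]
    ring
  have htail : ∀ i ∈ range Q, w (r + i) * D m (r + Q - (r + i)) x =
      w (r + i) * D m Q x - psi m (Q - 1) x * (w (r + i) * conj (D m i x)) := by
    intro i hi
    rw [show r + Q - (r + i) = Q - i by omega, D_sub hm hq (mem_range.1 hi).le x]
    ring
  rw [add_comm Q r, sum_range_add, sum_range_add, sum_congr rfl hhead, sum_congr rfl htail,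
    sum_add_distrib, sum_sub_distrib, ← sum_mul, ← sum_mul, ← mul_sum, ← mul_sum]
  ring

/-- The `k`-th summand of the expansion, with the Cesàro coefficient `A_{n^{(k)}-1}^{-α}` replaced
by the partial sum `∑_{i < n^{(k)}} w_i` of arbitrary weights. -/
def blockTerm (m : ℕ → ℕ) (w : ℕ → ℂ) (n k : ℕ) (x : G m) : ℂ :=
  D m (dig m n k * M m k) x * ∑ i ∈ range (npart m n (k + 1)), w i
    - psi m (dig m n k * M m k - 1) x *
      ∑ j ∈ range (dig m n k * M m k), w (npart m n k + j) * conj (D m j x)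

lemma blockTerm_congr {w : ℕ → ℂ} {n n' k : ℕ} (h : ∀ l ≤ k, dig m n l = dig m n' l)
    (x : G m) : blockTerm m w n k x = blockTerm m w n' k x := by
  have hnpart : ∀ j ≤ k + 1, npart m n j = npart m n' j := fun j hj =>
    sum_congr rfl fun l hl => by rw [h l (by simp at hl; omega)]
  rw [blockTerm, blockTerm, h k le_rfl, hnpart k (by omega), hnpart (k + 1) le_rfl]

theorem sum_range_mul_D_sub_eq_sum_blockTerm (hm : ∀ k, 2 ≤ m k) (w : ℕ → ℂ) (x : G m) :
    ∀ K n, n < M m K → ∑ i ∈ range n, w i * D m (n - i) x =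
      ∑ k ∈ range K, (∏ l ∈ Ico (k + 1) K, psi m (dig m n l * M m l) x) * blockTerm m w n k x := by
  have hm0 : ∀ k, 0 < m k := fun k => two_pos.trans_le (hm k)
  intro K
  induction K with
  | zero =>
    intro n hn
    obtain rfl : n = 0 := by simpa [M] using hn
    simp
  | succ K ih =>
    intro n hn
    obtain ⟨q, r, hq, hr, rfl⟩ : ∃ q r, q < m K ∧ r < M m K ∧ n = q * M m K + r :=
      ⟨dig m n K, npart m n K, Nat.mod_lt _ (hm0 K), npart_lt hm0 n K,
        (dig_mul_M_add_npart hn).symm⟩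
    have hdig_low : ∀ l < K, dig m (q * M m K + r) l = dig m r l := fun l hl =>
      dig_mul_M_add_of_lt hm0 hl q r
    have hdig_top : dig m (q * M m K + r) K = q := by
      rw [dig_add_of_mod_add_mod_lt (mul_M_mod_add_mod_lt hm0 hr q), dig_mul_M_self hm0,
        dig_eq_zero_of_lt hr, Nat.mod_eq_of_lt hq, add_zero]
    have hblock_top : blockTerm m w (q * M m K + r) K x =
        D m (q * M m K) x * ∑ i ∈ range (q * M m K + r), w i
          - psi m (q * M m K - 1) x * ∑ i ∈ range (q * M m K), w (r + i) * conj (D m i x) := by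
      rw [blockTerm, hdig_top, npart_eq_mod, npart_eq_mod, Nat.mod_eq_of_lt hn,
        Nat.mul_add_mod_self_right, Nat.mod_eq_of_lt hr]
    have hlow : ∀ k ∈ range K,
        (∏ l ∈ Ico (k + 1) (K + 1), psi m (dig m (q * M m K + r) l * M m l) x) *
            blockTerm m w (q * M m K + r) k x =
          psi m (q * M m K) x *
            ((∏ l ∈ Ico (k + 1) K, psi m (dig m r l * M m l) x) * blockTerm m w r k x) := by
      intro k hk
      have hk := mem_range.1 hk
      rw [prod_Ico_succ_top (by omega), hdig_top,
        prod_congr rfl fun l hl => by rw [hdig_low l (mem_Ico.1 hl).2],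
        blockTerm_congr fun l hl => hdig_low l (by omega)]
      ring
    rw [sum_range_mul_D_sub_mul_M_add hm w hq.le hr x, ih r hr, sum_range_succ, Ico_self,
      prod_empty, one_mul, sum_congr rfl hlow, ← mul_sum, hblock_top]
    ring

end Expansion

theorem lemma1_general (m : ℕ → ℕ) (hm : ∀ k, 2 ≤ m k) (α : ℝ) (A' n : ℕ) (h2 : n < M m (A' + 1))
    (x : G m) :
    ∑ j ∈ Finset.Icc 1 n, ((A (-α - 1) (n - j) : ℝ) : ℂ) * D m j x =
      ∑ k ∈ Finset.range (A' + 1),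
        (∏ l ∈ Finset.Icc (k + 1) A', psi m (dig m n l * M m l) x) *
          D m (dig m n k * M m k) x * ((A (-α) (npart m n (k + 1) - 1) : ℝ) : ℂ)
      - ∑ k ∈ Finset.range (A' + 1),
        (∏ l ∈ Finset.Icc (k + 1) A', psi m (dig m n l * M m l) x) *
          psi m (dig m n k * M m k - 1) x *
          ∑ j ∈ Finset.range (dig m n k * M m k),
            ((A (-α - 1) (npart m n k + j) : ℝ) : ℂ) * (starRingEnd ℂ) (D m j x) := by
  have hcoef : ∀ k, D m (dig m n k * M m k) x * ∑ i ∈ range (npart m n (k + 1)),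
      ((A (-α - 1) i : ℝ) : ℂ) =
        D m (dig m n k * M m k) x * ((A (-α) (npart m n (k + 1) - 1) : ℝ) : ℂ) := by
    intro k
    rcases Nat.eq_zero_or_pos (dig m n k) with hzero | hpos
    · -- here `npart m n (k + 1) - 1` may truncate, but `D m 0 x = 0`
      rw [hzero, zero_mul, D_zero, zero_mul, zero_mul]
    · have hnpart : 0 < npart m n (k + 1) := by
        rw [npart, sum_range_succ]
        exact Nat.add_pos_right _ (Nat.mul_pos hpos (M_pos (fun k => two_pos.trans_le (hm k)) k))
      rw [← sum_range_A_sub_one (-α) hnpart]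
      push_cast
      rfl
  rw [sum_Icc_one_sub (fun i j => ((A (-α - 1) i : ℝ) : ℂ) * D m j x),
    sum_range_mul_D_sub_eq_sum_blockTerm hm _ x (A' + 1) n h2, ← sum_sub_distrib]
  refine sum_congr rfl fun k _ => ?_
  rw [Ico_add_one_right_eq_Icc, blockTerm, hcoef]
  ring

/-- Lemma 1: expansion of `∑_{j=1}^{n} A_{n−j}^{−α−1} D_j(x)` for `M_A ≤ n < M_{A+1}`. -/
theorem lemma1 (m : ℕ → ℕ) (hm : ∀ k, 2 ≤ m k) (hb : ∃ B, ∀ k, m k ≤ B)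
    (α : ℝ) (hα0 : 0 < α) (hα1 : α < 1)
    (A' n : ℕ) (h1 : M m A' ≤ n) (h2 : n < M m (A' + 1)) (x : G m) :
    ∑ j ∈ Finset.Icc 1 n, ((A (-α - 1) (n - j) : ℝ) : ℂ) * D m j x =
      ∑ k ∈ Finset.range (A' + 1),
        (∏ l ∈ Finset.Icc (k + 1) A', psi m (dig m n l * M m l) x) *
          D m (dig m n k * M m k) x * ((A (-α) (npart m n (k + 1) - 1) : ℝ) : ℂ)
      - ∑ k ∈ Finset.range (A' + 1),
        (∏ l ∈ Finset.Icc (k + 1) A', psi m (dig m n l * M m l) x) *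
          psi m (dig m n k * M m k - 1) x *
          ∑ j ∈ Finset.range (dig m n k * M m k),
            ((A (-α - 1) (npart m n k + j) : ℝ) : ℂ) * (starRingEnd ℂ) (D m j x) :=
  lemma1_general m hm α A' n h2 x

end Vilenkin
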